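/- For every n ≥ 0, the quadruple (asc, des, MNA, MND) on S_n(231,312) has the same distribution as (des, asc, MND, MNA) on S_n(213,231). -/

import Mathlib

/-- The value of `π` at position `i` (0-based), as a natural number; `0` if out of range. -/
def pv {n : ℕ} (π : Equiv.Perm (Fin n)) (i : ℕ) : ℕ :=
  if h : i < n then (π ⟨i, h⟩ : ℕ) else 0

/-- The set of ascent positions (0-based) of `π`. -/
def ascents {n : ℕ} (π : Equiv.Perm (Fin n)) : Finset ℕ :=
  (Finset.range (n - 1)).filter fun i => pv π i < pv π (i + 1)

/-- The set of descent positions (0-based) of `π`. -/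
def descents {n : ℕ} (π : Equiv.Perm (Fin n)) : Finset ℕ :=
  (Finset.range (n - 1)).filter fun i => pv π (i + 1) < pv π i

def asc {n : ℕ} (π : Equiv.Perm (Fin n)) : ℕ := (ascents π).card

def des {n : ℕ} (π : Equiv.Perm (Fin n)) : ℕ := (descents π).card

/-- The maximum number of non-overlapping ascents of `π`. -/
noncomputable def MNA {n : ℕ} (π : Equiv.Perm (Fin n)) : ℕ :=
  sSup {k | ∃ S ⊆ ascents π, S.card = k ∧ ∀ i ∈ S, ∀ j ∈ S, i < j → i + 1 < j}

/-- The maximum number of non-overlapping descents of `π`. -/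
noncomputable def MND {n : ℕ} (π : Equiv.Perm (Fin n)) : ℕ :=
  sSup {k | ∃ S ⊆ descents π, S.card = k ∧ ∀ i ∈ S, ∀ j ∈ S, i < j → i + 1 < j}

def IsLRMax {n : ℕ} (π : Equiv.Perm (Fin n)) (i : Fin n) : Prop := ∀ j, j < i → π j < π i
def IsRLMax {n : ℕ} (π : Equiv.Perm (Fin n)) (i : Fin n) : Prop := ∀ j, i < j → π j < π i
def IsLRMin {n : ℕ} (π : Equiv.Perm (Fin n)) (i : Fin n) : Prop := ∀ j, j < i → π i < π j
def IsRLMin {n : ℕ} (π : Equiv.Perm (Fin n)) (i : Fin n) : Prop := ∀ j, i < j → π i < π j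

noncomputable def lrmax {n : ℕ} (π : Equiv.Perm (Fin n)) : ℕ := Nat.card {i : Fin n // IsLRMax π i}
noncomputable def rlmax {n : ℕ} (π : Equiv.Perm (Fin n)) : ℕ := Nat.card {i : Fin n // IsRLMax π i}
noncomputable def lrmin {n : ℕ} (π : Equiv.Perm (Fin n)) : ℕ := Nat.card {i : Fin n // IsLRMin π i}
noncomputable def rlmin {n : ℕ} (π : Equiv.Perm (Fin n)) : ℕ := Nat.card {i : Fin n // IsRLMin π i}

def Avoids123 {n : ℕ} (π : Equiv.Perm (Fin n)) : Prop :=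
  ¬ ∃ i j k : Fin n, i < j ∧ j < k ∧ π i < π j ∧ π j < π k
def Avoids132 {n : ℕ} (π : Equiv.Perm (Fin n)) : Prop :=
  ¬ ∃ i j k : Fin n, i < j ∧ j < k ∧ π i < π k ∧ π k < π j
def Avoids213 {n : ℕ} (π : Equiv.Perm (Fin n)) : Prop :=
  ¬ ∃ i j k : Fin n, i < j ∧ j < k ∧ π j < π i ∧ π i < π k
def Avoids231 {n : ℕ} (π : Equiv.Perm (Fin n)) : Prop :=
  ¬ ∃ i j k : Fin n, i < j ∧ j < k ∧ π k < π i ∧ π i < π j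
def Avoids312 {n : ℕ} (π : Equiv.Perm (Fin n)) : Prop :=
  ¬ ∃ i j k : Fin n, i < j ∧ j < k ∧ π j < π k ∧ π k < π i
def Avoids321 {n : ℕ} (π : Equiv.Perm (Fin n)) : Prop :=
  ¬ ∃ i j k : Fin n, i < j ∧ j < k ∧ π k < π j ∧ π j < π i

/-!
A permutation avoiding 231 and 312 is layered: for positions `i < j` we have `π i < π j` iff some
ascent lies in `[i, j)`. A permutation avoiding 213 and 231 takes at each position the maximum or
the minimum of the remaining values: for `i < j` we have `σ i < σ j` iff `i` is an ascent. In both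
classes the relative order of all entries is therefore a function of the ascent set, and ranking a
suitable key shows that every subset of `{0, …, n - 2}` occurs. Matching `π` with the `σ` whose
descent set is the ascent set of `π` swaps `asc` with `des` and `MNA` with `MND`, because these
statistics only depend on the ascent and descent sets, which are complementary.
-/

open Finset

section AscentsDescents

variable {n : ℕ}

lemma pv_of_lt (π : Equiv.Perm (Fin n)) {i : ℕ} (h : i < n) : pv π i = π ⟨i, h⟩ := dif_pos h

lemma mem_ascents {π : Equiv.Perm (Fin n)} {i : ℕ} :
    i ∈ ascents π ↔ ∃ h : i + 1 < n, π ⟨i, by omega⟩ < π ⟨i + 1, h⟩ := by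
  rw [ascents, mem_filter, mem_range]
  constructor
  · rintro ⟨hi, hlt⟩
    exact ⟨by omega, by rwa [pv_of_lt π (by omega), pv_of_lt π (by omega)] at hlt⟩
  · rintro ⟨hi, hlt⟩
    exact ⟨by omega, by rwa [pv_of_lt π (by omega), pv_of_lt π (by omega)]⟩

lemma mem_descents {π : Equiv.Perm (Fin n)} {i : ℕ} :
    i ∈ descents π ↔ ∃ h : i + 1 < n, π ⟨i + 1, h⟩ < π ⟨i, by omega⟩ := by
  rw [descents, mem_filter, mem_range]
  constructor
  · rintro ⟨hi, hlt⟩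
    exact ⟨by omega, by rwa [pv_of_lt π (by omega), pv_of_lt π (by omega)] at hlt⟩
  · rintro ⟨hi, hlt⟩
    exact ⟨by omega, by rwa [pv_of_lt π (by omega), pv_of_lt π (by omega)]⟩

lemma descents_eq_range_sdiff_ascents (π : Equiv.Perm (Fin n)) :
    descents π = range (n - 1) \ ascents π := by
  ext i
  simp only [mem_sdiff, mem_range, mem_ascents, mem_descents, not_exists, not_lt]
  constructor
  · rintro ⟨h, hlt⟩
    exact ⟨by omega, fun _ => hlt.le⟩
  · rintro ⟨hi, hle⟩
    exact ⟨by omega, (hle _).lt_of_ne (π.injective.ne (by simp [Fin.ext_iff]))⟩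

lemma ascents_subset_range (π : Equiv.Perm (Fin n)) : ascents π ⊆ range (n - 1) :=
  filter_subset _ _

lemma descents_subset_range (π : Equiv.Perm (Fin n)) : descents π ⊆ range (n - 1) :=
  filter_subset _ _

lemma ascents_eq_range_sdiff_descents (π : Equiv.Perm (Fin n)) :
    ascents π = range (n - 1) \ descents π := by
  rw [descents_eq_range_sdiff_ascents, Finset.sdiff_sdiff_eq_self (ascents_subset_range π)]

lemma ascents_eq_of_descents_eq {π σ : Equiv.Perm (Fin n)} (h : descents σ = ascents π) :
    ascents σ = descents π := by
  rw [ascents_eq_range_sdiff_descents, h, descents_eq_range_sdiff_ascents]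

end AscentsDescents

section RelativeOrder

variable {n : ℕ}

lemma Equiv.Perm.eq_of_forall_lt_iff {π σ : Equiv.Perm (Fin n)}
    (h : ∀ i j, i < j → (π i < π j ↔ σ i < σ j)) : π = σ := by
  suffices hmono : StrictMono (π.symm.trans σ) by
    have hid := (Equiv.Perm.monotone_iff _).1 hmono.monotone
    refine Equiv.ext fun i => ?_
    simpa using (congrArg (fun τ => τ (π i)) hid).symm
  intro x y hxy
  obtain ⟨i, rfl⟩ := π.surjective x
  obtain ⟨j, rfl⟩ := π.surjective y
  simp only [Equiv.trans_apply, Equiv.symm_apply_apply]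
  rcases lt_trichotomy i j with hij | rfl | hji
  · exact (h i j hij).1 hxy
  · exact absurd hxy (lt_irrefl _)
  · have : ¬ σ j < σ i := fun hσ => lt_asymm hxy ((h j i hji).2 hσ)
    exact (not_lt.1 this).lt_of_ne (σ.injective.ne hji.ne')

def rankPerm {α : Type*} [LinearOrder α] (f : Fin n → α) : Equiv.Perm (Fin n) :=
  (Tuple.sort f).symm

lemma rankPerm_lt_rankPerm_iff {α : Type*} [LinearOrder α] {f : Fin n → α}
    (hf : Function.Injective f) {i j : Fin n} : rankPerm f i < rankPerm f j ↔ f i < f j := by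
  have hsorted : StrictMono (f ∘ Tuple.sort f) :=
    (Tuple.monotone_sort f).strictMono_of_injective (hf.comp (Tuple.sort f).injective)
  simpa [rankPerm] using (hsorted.lt_iff_lt (a := rankPerm f i) (b := rankPerm f j)).symm

end RelativeOrder

section Layered

variable {n : ℕ}

lemma exists_ascent_between_of_lt (π : Equiv.Perm (Fin n)) {i j : Fin n} (hij : i < j)
    (h : π i < π j) : ∃ a ∈ ascents π, (i : ℕ) ≤ a ∧ a < j := by
  obtain ⟨j, hj⟩ := j
  induction j with
  | zero => exact absurd (Fin.lt_def.1 hij) (Nat.not_lt_zero _)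
  | succ j ih =>
    by_cases hasc : π ⟨j, by omega⟩ < π ⟨j + 1, hj⟩
    · exact ⟨j, mem_ascents.2 ⟨hj, hasc⟩, Nat.le_of_lt_succ hij, j.lt_succ_self⟩
    · have hdesc : π ⟨j + 1, hj⟩ < π ⟨j, by omega⟩ :=
        (not_lt.1 hasc).lt_of_ne (π.injective.ne (by simp))
      have hij' : i < ⟨j, by omega⟩ := by
        refine lt_of_le_of_ne (Nat.le_of_lt_succ hij) fun hi => hasc ?_
        rwa [← hi]
      obtain ⟨a, ha, hia, haj⟩ := ih (by omega) hij' (h.trans hdesc)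
      exact ⟨a, ha, hia, haj.trans j.lt_succ_self⟩

lemma Avoids231.lt_of_ascent_between {π : Equiv.Perm (Fin n)} (h231 : Avoids231 π)
    (h312 : Avoids312 π) {a : ℕ} (ha : a ∈ ascents π) {i j : Fin n} (hia : (i : ℕ) ≤ a)
    (haj : a < j) : π i < π j := by
  obtain ⟨ha1, hasc⟩ := mem_ascents.1 ha
  by_contra hij
  have hji : π j < π i :=
    (not_lt.1 hij).lt_of_ne (π.injective.ne (Fin.ne_of_val_ne (by omega)))
  have hja_ne : j ≠ ⟨a, by omega⟩ := Fin.ne_of_val_ne haj.ne'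
  rcases lt_or_gt_of_ne (π.injective.ne hja_ne) with hja | haj'
  · have hj : a + 1 < j := by
      refine lt_of_le_of_ne haj fun h => (lt_asymm hasc) ?_
      rwa [show (⟨a + 1, ha1⟩ : Fin n) = j from Fin.ext h]
    exact h231 ⟨⟨a, by omega⟩, ⟨a + 1, ha1⟩, j, Fin.mk_lt_mk.2 (by omega), hj, hja, hasc⟩
  · have hi : (i : ℕ) < a := by
      refine lt_of_le_of_ne hia fun h => lt_asymm hji ?_
      rwa [show i = ⟨a, by omega⟩ from Fin.ext h]
    exact h312 ⟨i, ⟨a, by omega⟩, j, hi, haj, haj', hji⟩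

lemma Avoids231.lt_iff_exists_ascent_between {π : Equiv.Perm (Fin n)} (h231 : Avoids231 π)
    (h312 : Avoids312 π) {i j : Fin n} (hij : i < j) :
    π i < π j ↔ ∃ a ∈ ascents π, (i : ℕ) ≤ a ∧ a < j :=
  ⟨exists_ascent_between_of_lt π hij,
    fun ⟨_, ha, hia, haj⟩ => h231.lt_of_ascent_between h312 ha hia haj⟩

lemma card_filter_lt_lt_card_filter_lt_iff (S : Finset ℕ) {i j : ℕ} (hij : i ≤ j) :
    #{a ∈ S | a < i} < #{a ∈ S | a < j} ↔ ∃ a ∈ S, i ≤ a ∧ a < j := by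
  have hsub : {a ∈ S | a < i} ⊆ {a ∈ S | a < j} := fun a ha => by
    simp only [mem_filter] at ha ⊢
    exact ⟨ha.1, by omega⟩
  constructor
  · intro hlt
    obtain ⟨a, ha, hna⟩ :=
      (ssubset_iff_of_subset hsub).1 (hsub.ssubset_of_ne fun h => hlt.ne (congrArg card h))
    simp only [mem_filter, not_and, not_lt] at ha hna
    exact ⟨a, ha.1, hna ha.1, ha.2⟩
  · rintro ⟨a, ha, hia, haj⟩
    refine card_lt_card ((ssubset_iff_of_subset hsub).2 ⟨a, ?_, ?_⟩) <;>
      simp only [mem_filter, not_and, not_lt] <;> tauto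

def layeredPerm (S : Finset ℕ) : Equiv.Perm (Fin n) :=
  rankPerm fun i : Fin n => toLex (#{a ∈ S | a < (i : ℕ)}, OrderDual.toDual (i : ℕ))

lemma layeredPerm_lt_layeredPerm_iff {S : Finset ℕ} {i j : Fin n} (hij : i < j) :
    layeredPerm S i < layeredPerm S j ↔ ∃ a ∈ S, (i : ℕ) ≤ a ∧ a < j := by
  have hinj : Function.Injective fun i : Fin n =>
      toLex (#{a ∈ S | a < (i : ℕ)}, OrderDual.toDual (i : ℕ)) :=
    fun i j h => Fin.ext (by simpa using congrArg (fun p => (ofLex p).2) h)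
  rw [layeredPerm, rankPerm_lt_rankPerm_iff hinj, Prod.Lex.toLex_lt_toLex,
    ← card_filter_lt_lt_card_filter_lt_iff S hij.le]
  simp [OrderDual.toDual_lt_toDual, hij.not_gt]

lemma avoids231_layeredPerm (S : Finset ℕ) : Avoids231 (layeredPerm (n := n) S) := by
  rintro ⟨i, j, k, hij, hjk, hki, hij'⟩
  obtain ⟨a, ha, hia, haj⟩ := (layeredPerm_lt_layeredPerm_iff hij).1 hij'
  exact lt_asymm hki ((layeredPerm_lt_layeredPerm_iff (hij.trans hjk)).2
    ⟨a, ha, hia, haj.trans hjk⟩)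

lemma avoids312_layeredPerm (S : Finset ℕ) : Avoids312 (layeredPerm (n := n) S) := by
  rintro ⟨i, j, k, hij, hjk, hjk', hki⟩
  obtain ⟨a, ha, hja, hak⟩ := (layeredPerm_lt_layeredPerm_iff hjk).1 hjk'
  exact lt_asymm hki ((layeredPerm_lt_layeredPerm_iff (hij.trans hjk)).2
    ⟨a, ha, by omega, hak⟩)

lemma ascents_layeredPerm {S : Finset ℕ} (hS : S ⊆ range (n - 1)) :
    ascents (layeredPerm (n := n) S) = S := by
  ext i
  rw [mem_ascents]
  constructor
  · rintro ⟨h, hlt⟩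
    obtain ⟨a, ha, hia, hai⟩ :=
      (layeredPerm_lt_layeredPerm_iff (Fin.mk_lt_mk.2 i.lt_succ_self)).1 hlt
    rwa [show i = a from le_antisymm hia (Nat.le_of_lt_succ hai)]
  · intro hi
    have h : i + 1 < n := by have := mem_range.1 (hS hi); omega
    exact ⟨h, (layeredPerm_lt_layeredPerm_iff (Fin.mk_lt_mk.2 i.lt_succ_self)).2
      ⟨i, hi, le_rfl, i.lt_succ_self⟩⟩

end Layered

section MaxMin

variable {n : ℕ}

lemma Avoids231.lt_of_mem_ascents {σ : Equiv.Perm (Fin n)} (h231 : Avoids231 σ) {i j : Fin n}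
    (hi : (i : ℕ) ∈ ascents σ) (hij : i < j) : σ i < σ j := by
  obtain ⟨hi1, hasc⟩ := mem_ascents.1 hi
  by_contra hlt
  have hji : σ j < σ i := (not_lt.1 hlt).lt_of_ne (σ.injective.ne hij.ne')
  have hj : (i : ℕ) + 1 < j := by
    refine lt_of_le_of_ne hij fun h => lt_asymm hasc ?_
    rwa [show (⟨i + 1, hi1⟩ : Fin n) = j from Fin.ext h]
  exact h231 ⟨i, ⟨i + 1, hi1⟩, j, Fin.lt_def.2 (Nat.lt_succ_self _), hj, hji, hasc⟩

lemma Avoids213.lt_of_mem_descents {σ : Equiv.Perm (Fin n)} (h213 : Avoids213 σ) {i j : Fin n}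
    (hi : (i : ℕ) ∈ descents σ) (hij : i < j) : σ j < σ i := by
  obtain ⟨hi1, hdesc⟩ := mem_descents.1 hi
  by_contra hlt
  have hij' : σ i < σ j := (not_lt.1 hlt).lt_of_ne (σ.injective.ne hij.ne)
  have hj : (i : ℕ) + 1 < j := by
    refine lt_of_le_of_ne hij fun h => lt_asymm hdesc ?_
    rwa [show (⟨i + 1, hi1⟩ : Fin n) = j from Fin.ext h]
  exact h213 ⟨i, ⟨i + 1, hi1⟩, j, Fin.lt_def.2 (Nat.lt_succ_self _), hj, hdesc, hij'⟩

lemma Avoids213.lt_iff_notMem_descents {σ : Equiv.Perm (Fin n)} (h213 : Avoids213 σ)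
    (h231 : Avoids231 σ) {i j : Fin n} (hij : i < j) : σ i < σ j ↔ (i : ℕ) ∉ descents σ := by
  refine ⟨fun hlt hi => lt_asymm hlt (h213.lt_of_mem_descents hi hij), fun hi => ?_⟩
  refine h231.lt_of_mem_ascents ?_ hij
  rw [ascents_eq_range_sdiff_descents]
  exact mem_sdiff.2 ⟨mem_range.2 (by omega), hi⟩

/-- Each position in `D` takes the largest value not used further left, every other position the
smallest one. -/
def maxMinPerm (D : Finset ℕ) : Equiv.Perm (Fin n) :=
  rankPerm fun i : Fin n => if (i : ℕ) ∈ D then 2 * n - i else (i : ℕ)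

lemma maxMinPerm_lt_maxMinPerm_iff {D : Finset ℕ} {i j : Fin n} (hij : i < j) :
    maxMinPerm D i < maxMinPerm D j ↔ (i : ℕ) ∉ D := by
  have hinj : Function.Injective fun i : Fin n => if (i : ℕ) ∈ D then 2 * n - i else (i : ℕ) :=
    fun i j h => Fin.ext (by simp only at h; split_ifs at h <;> omega)
  rw [maxMinPerm, rankPerm_lt_rankPerm_iff hinj]
  by_cases hi : (i : ℕ) ∈ D <;> by_cases hj : (j : ℕ) ∈ D <;> simp [hi, hj] <;> omega

lemma avoids213_maxMinPerm (D : Finset ℕ) : Avoids213 (maxMinPerm (n := n) D) := by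
  rintro ⟨i, j, k, hij, hjk, hji, hik⟩
  exact lt_asymm hji ((maxMinPerm_lt_maxMinPerm_iff hij).2
    ((maxMinPerm_lt_maxMinPerm_iff (hij.trans hjk)).1 hik))

lemma avoids231_maxMinPerm (D : Finset ℕ) : Avoids231 (maxMinPerm (n := n) D) := by
  rintro ⟨i, j, k, hij, hjk, hki, hij'⟩
  exact lt_asymm hki ((maxMinPerm_lt_maxMinPerm_iff (hij.trans hjk)).2
    ((maxMinPerm_lt_maxMinPerm_iff hij).1 hij'))

lemma descents_maxMinPerm {D : Finset ℕ} (hD : D ⊆ range (n - 1)) :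
    descents (maxMinPerm (n := n) D) = D := by
  ext i
  rw [mem_descents]
  constructor
  · rintro ⟨h, hlt⟩
    by_contra hi
    exact lt_asymm hlt ((maxMinPerm_lt_maxMinPerm_iff (Fin.mk_lt_mk.2 i.lt_succ_self)).2 hi)
  · intro hi
    have h : i + 1 < n := by have := mem_range.1 (hD hi); omega
    refine ⟨h, (not_lt.1 fun hlt => ?_).lt_of_ne ((maxMinPerm D).injective.ne (by simp))⟩
    exact (maxMinPerm_lt_maxMinPerm_iff (Fin.mk_lt_mk.2 i.lt_succ_self)).1 hlt hi

end MaxMin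

noncomputable def ascentsEquivOfAvoids231And312 (n : ℕ) :
    {π : Equiv.Perm (Fin n) // Avoids231 π ∧ Avoids312 π} ≃ {S : Finset ℕ // S ⊆ range (n - 1)} :=
  Equiv.ofBijective (fun π => ⟨ascents π.1, ascents_subset_range π.1⟩) <| by
    refine ⟨fun ⟨π, h231, h312⟩ ⟨σ, h231', h312'⟩ h => ?_, fun ⟨S, hS⟩ => ?_⟩
    · have h : ascents π = ascents σ := congrArg Subtype.val h
      refine Subtype.ext (Equiv.Perm.eq_of_forall_lt_iff fun i j hij => ?_)
      rw [h231.lt_iff_exists_ascent_between h312 hij,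
        h231'.lt_iff_exists_ascent_between h312' hij, h]
    · exact ⟨⟨layeredPerm S, avoids231_layeredPerm S, avoids312_layeredPerm S⟩,
        Subtype.ext (ascents_layeredPerm hS)⟩

noncomputable def descentsEquivOfAvoids213And231 (n : ℕ) :
    {σ : Equiv.Perm (Fin n) // Avoids213 σ ∧ Avoids231 σ} ≃ {D : Finset ℕ // D ⊆ range (n - 1)} :=
  Equiv.ofBijective (fun σ => ⟨descents σ.1, descents_subset_range σ.1⟩) <| by
    refine ⟨fun ⟨π, h213, h231⟩ ⟨σ, h213', h231'⟩ h => ?_, fun ⟨D, hD⟩ => ?_⟩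
    · have h : descents π = descents σ := congrArg Subtype.val h
      refine Subtype.ext (Equiv.Perm.eq_of_forall_lt_iff fun i j hij => ?_)
      rw [h213.lt_iff_notMem_descents h231 hij, h213'.lt_iff_notMem_descents h231' hij, h]
    · exact ⟨⟨maxMinPerm D, avoids213_maxMinPerm D, avoids231_maxMinPerm D⟩,
        Subtype.ext (descents_maxMinPerm hD)⟩

lemma statistics_eq_of_descents_eq {n : ℕ} {π σ : Equiv.Perm (Fin n)}
    (h : descents σ = ascents π) :
    des σ = asc π ∧ asc σ = des π ∧ MND σ = MNA π ∧ MNA σ = MND π := by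
  simp only [asc, des, MNA, MND, h, ascents_eq_of_descents_eq h, and_self]

theorem equidistribution_swap_231_312_vs_213_231 (n a b c d : ℕ) :
    Nat.card {π : Equiv.Perm (Fin n) // (Avoids231 π ∧ Avoids312 π) ∧
      asc π = a ∧ des π = b ∧ MNA π = c ∧ MND π = d} =
    Nat.card {σ : Equiv.Perm (Fin n) // (Avoids213 σ ∧ Avoids231 σ) ∧
      des σ = a ∧ asc σ = b ∧ MND σ = c ∧ MNA σ = d} := by
  let e := (ascentsEquivOfAvoids231And312 n).trans (descentsEquivOfAvoids213And231 n).symm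
  have he (π) : descents (e π).1 = ascents π.1 :=
    congrArg Subtype.val ((descentsEquivOfAvoids213And231 n).apply_symm_apply _)
  refine Nat.card_congr <| (Equiv.subtypeSubtypeEquivSubtypeInter _ _).symm.trans <|
    (e.subtypeEquiv fun π => ?_).trans (Equiv.subtypeSubtypeEquivSubtypeInter _ _)
  obtain ⟨hdes, hasc, hMND, hMNA⟩ := statistics_eq_of_descents_eq (he π)
  rw [hdes, hasc, hMND, hMNA]
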